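/- Define N₇(η) := cosh(η)/sinh⁵(η) − (4/3)·cosh(η)/sinh³(η) − (8/3)·(1 − coth η) for η > 0. Then N₇(η) > 0 for all sufficiently large η and lim_{η→∞} (1/η) · log N₇(η) = −6. -/

import Mathlib

open Real Filter

/-- Numerator of the hitting probability of the 7-dimensional hyperbolic Brownian motion:
`N₇(η) = cosh η / sinh⁵ η - (4/3) cosh η / sinh³ η - (8/3)(1 - coth η)`. -/
noncomputable def N₇ (η : ℝ) : ℝ :=
  Real.cosh η / Real.sinh η ^ 5 - (4 / 3) * (Real.cosh η / Real.sinh η ^ 3) -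
    (8 / 3) * (1 - Real.cosh η / Real.sinh η)

open Topology

/-!
With `x = e^{-η}` one has `sinh η = (1 - x²)/(2x)` and `cosh η = (1 + x²)/(2x)`, and clearing
denominators turns `N₇(η)` into `x⁶ · 16(10 - 5x² + x⁴) / (3(1 - x²)⁵)`: the terms of order
`x²` and `x⁴` cancel. The cofactor tends to `160/3 > 0` as `x → 0`, so `N₇(η)` is eventually
positive and `log N₇(η) = -6η + O(1)`.
-/

theorem eventually_pos_and_tendsto_log_div_of_eventuallyEq_mul_exp {f g : ℝ → ℝ} {c L : ℝ}
    (hL : 0 < L) (hg : Tendsto g atTop (𝓝 L))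
    (hf : f =ᶠ[atTop] fun η => g η * exp (-(c * η))) :
    (∀ᶠ η in atTop, 0 < f η) ∧ Tendsto (fun η => (1 / η) * log (f η)) atTop (𝓝 (-c)) := by
  have hg_pos : ∀ᶠ η in atTop, 0 < g η := hg.eventually (lt_mem_nhds hL)
  refine ⟨?_, ?_⟩
  · filter_upwards [hf, hg_pos] with η hfη hgη
    rw [hfη]
    positivity
  · have hlog : Tendsto (fun η => (1 / η) * log (g η) - c) atTop (𝓝 (-c)) := by
      have hinv : Tendsto (fun η : ℝ => 1 / η) atTop (𝓝 0) := by
        simpa using tendsto_inv_atTop_zero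
      simpa using (hinv.mul ((continuousAt_log hL.ne').tendsto.comp hg)).sub_const c
    refine hlog.congr' ?_
    filter_upwards [hf, hg_pos, eventually_gt_atTop 0] with η hfη hgη hη
    rw [hfη, log_mul hgη.ne' (exp_pos _).ne', log_exp]
    field_simp
    ring

/-- The cofactor of `e^{-6η}` in `N₇(η)`, as a function of `x = e^{-η}`. -/
noncomputable def N₇Cofactor (x : ℝ) : ℝ :=
  16 * (10 - 5 * x ^ 2 + x ^ 4) / (3 * (1 - x ^ 2) ^ 5)

theorem N₇_eq_cofactor_mul_exp {η : ℝ} (hη : 0 < η) :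
    N₇ η = N₇Cofactor (exp (-η)) * exp (-(6 * η)) := by
  set x := exp (-η) with hx
  have hx_pos : 0 < x := exp_pos _
  have hx_lt_one : x < 1 := exp_lt_one_iff.mpr (neg_lt_zero.mpr hη)
  have hexp : exp η = x⁻¹ := by rw [hx, exp_neg, inv_inv]
  have hexp6 : exp (-(6 * η)) = x ^ 6 := by
    rw [show -(6 * η) = (6 : ℕ) * -η by push_cast; ring, exp_nat_mul]
  have hsq : (1 : ℝ) - x ^ 2 ≠ 0 := by nlinarith
  have hsinh : sinh η = (1 - x ^ 2) / (2 * x) := by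
    rw [sinh_eq, hexp, ← hx]
    field_simp
  have hcosh : cosh η = (1 + x ^ 2) / (2 * x) := by
    rw [cosh_eq, hexp, ← hx]
    field_simp
  rw [N₇, N₇Cofactor, hsinh, hcosh, hexp6]
  field_simp
  ring

theorem tendsto_N₇Cofactor_exp_neg :
    Tendsto (fun η => N₇Cofactor (exp (-η))) atTop (𝓝 (160 / 3)) := by
  have hcont : ContinuousAt N₇Cofactor 0 := by
    unfold N₇Cofactor
    exact ContinuousAt.div (by fun_prop) (by fun_prop) (by norm_num)
  have h := hcont.tendsto.comp tendsto_exp_neg_atTop_nhds_zero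
  norm_num [N₇Cofactor] at h
  exact h

/-- `N₇` is eventually positive and `lim_{η→∞} (1/η) log N₇(η) = -6`, i.e. the hitting
probability of a hyperbolic ball for the 7-dimensional hyperbolic Brownian motion decays
with exponential rate `n - 1 = 6`. -/
theorem hitting_decay_dim7 :
    (∀ᶠ η : ℝ in Filter.atTop, 0 < N₇ η) ∧
    Filter.Tendsto (fun η : ℝ => (1 / η) * Real.log (N₇ η)) Filter.atTop (nhds (-6)) :=
  eventually_pos_and_tendsto_log_div_of_eventuallyEq_mul_exp (by norm_num)
    tendsto_N₇Cofactor_exp_neg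
    (eventually_gt_atTop 0 |>.mono fun _ hη => N₇_eq_cofactor_mul_exp hη)
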